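/- arXiv:1609.03944 — 4 statements merged into one kernel-verified Lean document; each statement's English description precedes it below -/
import Mathlib

section
/- Every crossed module of Lie algebras (∂ : m → n, D : n → Der(m)) gives rise to a category internal to Lie algebras (a strict Lie 2-algebra): objects n, morphisms the semidirect product m ⋊ n with bracket [(x₁, y₁), (x₂, y₂)] = ([x₁, x₂] + D(y₁)x₂ − D(y₂)x₁, [y₁, y₂]), source s(x,y) = y, target t(x,y) = ∂x + y, identity 1_y = (0, y), and composition (x₁, ∂x₂ + y₂)∘(x₂, y₂) = (x₁ + x₂, y₂); all structure maps are Lie algebra homomorphisms and the category axioms (associativity, unitality of composition, compatibility of source/target) hold. -/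
/-!
Source, target and unit are visibly compatible with the brackets; the two crossed-module axioms
are exactly what is needed for the rest. `∂ (D y x) = ⁅y, ∂ x⁆` makes the target
`t(x, y) = ∂ x + y` a Lie algebra homomorphism on the semidirect product, and
`D (∂ x) x' = ⁅x, x'⁆` makes composition of composable pairs commute with the bracket
(the interchange law). Everything else is additive bookkeeping.
-/

section CrossedModule

variable {R m n : Type*} [CommRing R] [LieRing m] [LieAlgebra R m] [LieRing n] [LieAlgebra R n]
  (del : m →ₗ⁅R⁆ n) (D : n →ₗ⁅R⁆ LieDerivation R m m)

theorem crossedModule_target_lie (hcm1 : ∀ (y : n) (x : m), del (D y x) = ⁅y, del x⁆)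
    (x₁ x₂ : m) (y₁ y₂ : n) :
    del (⁅x₁, x₂⁆ + D y₁ x₂ - D y₂ x₁) + ⁅y₁, y₂⁆ = ⁅del x₁ + y₁, del x₂ + y₂⁆ := by
  simp only [map_add, map_sub, LieHom.map_lie, hcm1, lie_add, add_lie, ← lie_skew (del x₁) y₂]
  abel

theorem crossedModule_interchange (hcm2 : ∀ x x' : m, D (del x) x' = ⁅x, x'⁆)
    (x₁ x₂ x₁' x₂' : m) (y y' : n) :
    (⁅x₁, x₁'⁆ + D (del x₂ + y) x₁' - D (del x₂' + y') x₁) + (⁅x₂, x₂'⁆ + D y x₂' - D y' x₂) =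
      ⁅x₁ + x₂, x₁' + x₂'⁆ + D y (x₁' + x₂') - D y' (x₁ + x₂) := by
  simp only [map_add, hcm2, LieDerivation.coe_add, Pi.add_apply, lie_add, add_lie,
    ← lie_skew x₁ x₂']
  abel

end CrossedModule

/-- Every crossed module of Lie algebras gives rise to a category internal to Lie algebras
    (a strict Lie 2-algebra): objects `n`, morphisms the semidirect product `m ⋊ n`,
    source `s(x,y) = y`, target `t(x,y) = ∂ x + y`, unit `1_y = (0,y)` and composition
    `(x₁, ∂ x₂ + y₂) ∘ (x₂, y₂) = (x₁ + x₂, y₂)`; all structure maps are Lie algebra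
    homomorphisms and the category axioms hold. -/
theorem stmt_7 {m n : Type*} [LieRing m] [LieAlgebra ℝ m] [LieRing n] [LieAlgebra ℝ n]
    (del : m →ₗ⁅ℝ⁆ n) (D : n →ₗ⁅ℝ⁆ LieDerivation ℝ m m)
    (hcm1 : ∀ (y : n) (x : m), del (D y x) = ⁅y, del x⁆)
    (hcm2 : ∀ x x' : m, D (del x) x' = ⁅x, x'⁆) :
    let br : m × n → m × n → m × n := fun p q =>
      (⁅p.1, q.1⁆ + D p.2 q.1 - D q.2 p.1, ⁅p.2, q.2⁆)
    let src : m × n → n := fun p => p.2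
    let tgt : m × n → n := fun p => del p.1 + p.2
    let un : n → m × n := fun y => (0, y)
    let comp : m × n → m × n → m × n := fun p q => (p.1 + q.1, q.2)
    -- the structure maps are Lie algebra homomorphisms
    (∀ p q : m × n, src (br p q) = ⁅src p, src q⁆) ∧
    (∀ p q : m × n, tgt (br p q) = ⁅tgt p, tgt q⁆) ∧
    (∀ y y' : n, un ⁅y, y'⁆ = br (un y) (un y')) ∧
    (∀ p q p' q' : m × n, src p = tgt q → src p' = tgt q' →
      src (br p p') = tgt (br q q') ∧
      comp (br p p') (br q q') = br (comp p q) (comp p' q')) ∧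
    -- compatibility of source and target with units and composition
    (∀ y : n, src (un y) = y) ∧
    (∀ y : n, tgt (un y) = y) ∧
    (∀ p q : m × n, src p = tgt q → src (comp p q) = src q ∧ tgt (comp p q) = tgt p) ∧
    -- associativity
    (∀ p q r : m × n, src p = tgt q → src q = tgt r →
      comp (comp p q) r = comp p (comp q r)) ∧
    -- unitality
    (∀ p : m × n, comp p (un (src p)) = p) ∧
    (∀ p : m × n, comp (un (tgt p)) p = p) := by
  intro br src tgt un comp
  refine ⟨fun _ _ => rfl, fun p q => crossedModule_target_lie del D hcm1 p.1 q.1 p.2 q.2,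
    fun y y' => ?_, fun p q p' q' hp hp' => ⟨?_, ?_⟩, fun _ => rfl, fun y => ?_,
    fun p q hpq => ⟨rfl, ?_⟩, fun p q r _ _ => ?_, fun p => ?_, fun p => ?_⟩
  · simp [br, un]
  · simp only [src, tgt, br] at hp hp' ⊢
    rw [hp, hp', crossedModule_target_lie del D hcm1]
  · simp only [src, tgt] at hp hp'
    simp only [br, comp, hp, hp', crossedModule_interchange del D hcm2]
  · simp [tgt, un]
  · simp only [src, tgt, comp] at hpq ⊢
    rw [map_add, add_assoc, ← hpq]
  · simp [comp, add_assoc]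
  · simp [comp, un, src]
  · simp [comp, un, tgt]
end

section
/- Let V = {V₁ ⇉ V₀} be a 2-vector space with source s, target t, unit 1, and linear composition m defined on composable pairs. Then for composable morphisms (w₂, w₁) (i.e., s(w₂) = t(w₁)), the composition is given by the formula m(w₂, w₁) = w₂ + w₁ − 1_{t(w₁)}. -/
/-- In a 2-vector space, the (linear, unital) composition is necessarily given on
    composable pairs by `m(w₂, w₁) = w₂ + w₁ - e (t w₁)`. -/
theorem stmt_10 {V₁ V₀ : Type*} [AddCommGroup V₁] [Module ℝ V₁]
    [AddCommGroup V₀] [Module ℝ V₀]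
    (s t : V₁ →ₗ[ℝ] V₀) (e : V₀ →ₗ[ℝ] V₁)
    (hse : ∀ v, s (e v) = v) (hte : ∀ v, t (e v) = v)
    (comp : V₁ → V₁ → V₁)
    (hadd : ∀ w₂ w₁ w₂' w₁', s w₂ = t w₁ → s w₂' = t w₁' →
      comp (w₂ + w₂') (w₁ + w₁') = comp w₂ w₁ + comp w₂' w₁')
    (hunit_r : ∀ w, comp w (e (s w)) = w)
    (hunit_l : ∀ w, comp (e (t w)) w = w) :
    ∀ w₂ w₁, s w₂ = t w₁ → comp w₂ w₁ = w₂ + w₁ - e (t w₁) := by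
  intro w₂ w₁ h
  set u := e (t w₁) with hu
  have h1 : comp (w₂ + u) (u + w₁) = w₂ + w₁ := by
    rw [hadd w₂ u u w₁ (by rw [hte]; exact h) (by rw [hse]), hunit_l w₁]
    have hu' : e (s w₂) = u := by rw [h]
    rw [← hu', hunit_r w₂]
  have h2 : comp (w₂ + u) (w₁ + u) = comp w₂ w₁ + u := by
    rw [hadd w₂ w₁ u u h (by rw [hse, hte])]
    congr 1
    have := hunit_r u
    rwa [hse] at this
  rw [add_comm u w₁] at h1
  rw [h1] at h2
  exact eq_sub_of_add_eq h2.symm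
end

section
/- Let V = {V₁ ⇉ V₀} be a 2-vector space, let v₁, …, v_s ∈ V₀ and let w_{ij} ∈ V₁ be morphisms from v_j to v_i satisfying the cocycle conditions w_{ii} = 1_{v_i}, w_{ji} = w_{ij}⁻¹, and w_{ij} ∘ w_{jk} = w_{ik}. Then for any λ₁, …, λ_s ∈ [0,1] with Σ λ_k = 1 there exist morphisms z_i from Σ_k λ_k v_k to v_i with w_{ij} = z_i ∘ z_j⁻¹ for all i, j. -/
/-- Cocycle splitting in a 2-vector space: given objects `v i` and a cocycle of
    morphisms `w i j : v j → v i`, and a convex combination `∑ λ k • v k`, there are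
    morphisms `z i : ∑ λ k • v k → v i` with `w i j = z i ∘ (z j)⁻¹`
    (the inverse of `z j` being `e (s (z j)) + e (t (z j)) - z j`). -/
theorem stmt_12 {V₁ V₀ : Type*} [AddCommGroup V₁] [Module ℝ V₁]
    [AddCommGroup V₀] [Module ℝ V₀]
    (s t : V₁ →ₗ[ℝ] V₀) (e : V₀ →ₗ[ℝ] V₁)
    (hse : ∀ v, s (e v) = v) (hte : ∀ v, t (e v) = v)
    (comp : V₁ → V₁ → V₁)
    (hadd : ∀ w₂ w₁ w₂' w₁', s w₂ = t w₁ → s w₂' = t w₁' →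
      comp (w₂ + w₂') (w₁ + w₁') = comp w₂ w₁ + comp w₂' w₁')
    (hunit_r : ∀ w, comp w (e (s w)) = w)
    (hunit_l : ∀ w, comp (e (t w)) w = w)
    (k : ℕ) (v : Fin k → V₀) (w : Fin k → Fin k → V₁)
    (hws : ∀ i j, s (w i j) = v j) (hwt : ∀ i j, t (w i j) = v i)
    (hrefl : ∀ i, w i i = e (v i))
    (hinv : ∀ i j, comp (w i j) (w j i) = e (v i))
    (hcoc : ∀ i j l, comp (w i j) (w j l) = w i l)
    (lam : Fin k → ℝ) (hlam0 : ∀ i, 0 ≤ lam i) (hlam1' : ∀ i, lam i ≤ 1)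
    (hlam1 : ∑ i, lam i = 1) :
    ∃ z : Fin k → V₁,
      (∀ i, s (z i) = ∑ l, lam l • v l) ∧
      (∀ i, t (z i) = v i) ∧
      (∀ i j, w i j = comp (z i) (e (s (z j)) + e (t (z j)) - z j)) := by
  -- the composition is forced to be `a + b - e (s a)` on composable pairs
  have key : ∀ a b : V₁, s a = t b → comp a b = a + b - e (s a) := by
    intro a b hab
    have h0 : comp (a - e (t b)) 0 = a - e (t b) := by
      have h := hunit_r (a - e (t b))
      simpa [map_sub, hse, hab] using h
    have h := hadd (e (t b)) b (a - e (t b)) 0 (by simp [hse])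
      (by simp [map_sub, hse, hab])
    rw [hunit_l b, h0, show e (t b) + (a - e (t b)) = a by abel, add_zero] at h
    rw [h, hab]; abel
  set z : Fin k → V₁ := fun i => ∑ l, lam l • w i l with hz
  have hzs : ∀ i, s (z i) = ∑ l, lam l • v l := by
    intro i; simp [hz, hws]
  have hzt : ∀ i, t (z i) = v i := by
    intro i
    simp only [hz, map_sum, map_smul, hwt, ← Finset.sum_smul, hlam1, one_smul]
  refine ⟨z, hzs, hzt, fun i j => ?_⟩
  have hcomp : s (z i) = t (e (s (z j)) + e (t (z j)) - z j) := by
    simp [map_add, map_sub, hte, hzs]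
  rw [key _ _ hcomp, hzs i, hzs j, hzt j]
  -- reduces to: w i j = z i - z j + e (v j)
  have hwl : ∀ l, w i l - w j l = w i j - e (v j) := by
    intro l
    have h1 := hcoc i j l
    rw [key _ _ (by rw [hws, hwt]), hws] at h1
    rw [← h1]; abel
  have : z i - z j = w i j - e (v j) := by
    rw [hz]
    simp only [← Finset.sum_sub_distrib, ← smul_sub, hwl, ← Finset.sum_smul, hlam1, one_smul]
  have goal : z i + (e (∑ l, lam l • v l) + e (v j) - z j) - e (∑ l, lam l • v l)
      = w i j := by
    rw [show z i + (e (∑ l, lam l • v l) + e (v j) - z j) - e (∑ l, lam l • v l)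
        = (z i - z j) + e (v j) by abel, this]
    abel
  rw [goal]
end

section
/- Let V be a 2-vector space with source s, target t. Suppose ker(s) and V₀ carry Lie algebra structures, ∂ := t|_{ker s} : ker(s) → V₀ is a Lie algebra homomorphism, and D : V₀ → Der(ker s) is a Lie algebra homomorphism making (∂, D) a crossed module. Then the bracket [(x₁,y₁),(x₂,y₂)] = ([x₁,x₂] + D(y₁)x₂ − D(y₂)x₁, [y₁,y₂]) on V₁ ≅ ker(s) ⊕ V₀ makes V a category internal to Lie algebras: s, t, the unit, and the composition are all Lie algebra homomorphisms. -/
attribute [local instance 100] LieRing.ofAssociativeRing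

/-!
Write `V₁ ≅ K ⊕ L` with `K = ker s`, `L = V₀`. The Peiffer identity `D (∂ x) x' = ⁅x, x'⁆`
expresses the bracket of `K` through `D`, so it is biadditive and skew for the additive structure
of `K` as a submodule. Equivariance `∂ (D y x) = ⁅y, ∂ x⁆` makes the target map `(x, y) ↦ ∂ x + y`
a Lie homomorphism, and on composable pairs the two sides of the interchange law differ only by
`⁅p₁, q₁'⁆ + ⁅q₁', p₁⁆`, which vanishes by skew-symmetry.
-/

def crossedComp {K L : Type*} [Add K] (p q : K × L) : K × L := (p.1 + q.1, q.2)

section CrossedModule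

variable {R K L : Type*} [CommRing R] [LieRing L] [LieAlgebra R L] [AddCommGroup K] [Module R K]

def crossedTarget (δ : K →ₗ[R] L) (p : K × L) : L := δ p.1 + p.2

variable [Bracket K K]

def crossedBracket (D : L →ₗ⁅R⁆ Module.End R K) (p q : K × L) : K × L :=
  (⁅p.1, q.1⁆ + D p.2 q.1 - D q.2 p.1, ⁅p.2, q.2⁆)

variable {δ : K →ₗ[R] L} {D : L →ₗ⁅R⁆ Module.End R K}

theorem lie_zero_of_peiffer (hpeiffer : ∀ x x', D (δ x) x' = ⁅x, x'⁆) (x : K) :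
    ⁅x, (0 : K)⁆ = 0 := by
  rw [← hpeiffer, map_zero]

theorem lie_add_of_peiffer (hpeiffer : ∀ x x', D (δ x) x' = ⁅x, x'⁆) (x a b : K) :
    ⁅x, a + b⁆ = ⁅x, a⁆ + ⁅x, b⁆ := by
  simp only [← hpeiffer, map_add]

theorem add_lie_of_peiffer (hpeiffer : ∀ x x', D (δ x) x' = ⁅x, x'⁆) (a b x : K) :
    ⁅a + b, x⁆ = ⁅a, x⁆ + ⁅b, x⁆ := by
  simp only [← hpeiffer, map_add, LinearMap.add_apply]

theorem lie_skew_of_peiffer (hpeiffer : ∀ x x', D (δ x) x' = ⁅x, x'⁆)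
    (hself : ∀ x : K, ⁅x, x⁆ = 0) (a b : K) : -⁅b, a⁆ = ⁅a, b⁆ := by
  have h := hself (a + b)
  rw [add_lie_of_peiffer hpeiffer, lie_add_of_peiffer hpeiffer, lie_add_of_peiffer hpeiffer,
    hself, hself, zero_add, add_zero] at h
  exact neg_eq_of_add_eq_zero_left h

theorem crossedTarget_crossedBracket (hδ : ∀ x x', δ ⁅x, x'⁆ = ⁅δ x, δ x'⁆)
    (hequiv : ∀ y x, δ (D y x) = ⁅y, δ x⁆) (p q : K × L) :
    crossedTarget δ (crossedBracket D p q) = ⁅crossedTarget δ p, crossedTarget δ q⁆ := by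
  simp only [crossedTarget, crossedBracket, map_add, map_sub, hδ, hequiv, add_lie, lie_add]
  rw [← lie_skew q.2 (δ p.1)]
  abel

theorem crossedBracket_mk_zero_mk_zero (hpeiffer : ∀ x x', D (δ x) x' = ⁅x, x'⁆) (y y' : L) :
    crossedBracket D (0, y) (0, y') = (0, ⁅y, y'⁆) := by
  simp only [crossedBracket, lie_zero_of_peiffer hpeiffer, map_zero, sub_zero, add_zero]

theorem crossedComp_crossedBracket (hpeiffer : ∀ x x', D (δ x) x' = ⁅x, x'⁆)
    (hself : ∀ x : K, ⁅x, x⁆ = 0) {p q p' q' : K × L}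
    (hpq : p.2 = crossedTarget δ q) (hpq' : p'.2 = crossedTarget δ q') :
    crossedComp (crossedBracket D p p') (crossedBracket D q q') =
      crossedBracket D (crossedComp p q) (crossedComp p' q') := by
  obtain ⟨p₁, p₂⟩ := p
  obtain ⟨q₁, q₂⟩ := q
  obtain ⟨p₁', p₂'⟩ := p'
  obtain ⟨q₁', q₂'⟩ := q'
  dsimp only [crossedTarget] at hpq hpq'
  subst hpq hpq'
  refine Prod.ext ?_ rfl
  simp only [crossedComp, crossedBracket, map_add, LinearMap.add_apply, hpeiffer,
    lie_add_of_peiffer hpeiffer, add_lie_of_peiffer hpeiffer]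
  rw [← lie_skew_of_peiffer hpeiffer hself p₁ q₁']
  abel

end CrossedModule

theorem stmt_17_general {V₁ V₀ : Type*} [AddCommGroup V₁] [Module ℝ V₁]
    [LieRing V₀] [LieAlgebra ℝ V₀]
    (s t : V₁ →ₗ[ℝ] V₀)
    [LieRing ↥(LinearMap.ker s)] [LieAlgebra ℝ ↥(LinearMap.ker s)]
    (del : ↥(LinearMap.ker s) →ₗ⁅ℝ⁆ V₀)
    (hdel : ∀ x : LinearMap.ker s, del x = t (x : V₁))
    (D : V₀ →ₗ⁅ℝ⁆ Module.End ℝ ↥(LinearMap.ker s))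
    (hcm1 : ∀ (y : V₀) (x : LinearMap.ker s), del (D y x) = ⁅y, del x⁆)
    (hcm2 : ∀ x x' : LinearMap.ker s, D (del x) x' = ⁅x, x'⁆) :
    let K := ↥(LinearMap.ker s)
    let br : K × V₀ → K × V₀ → K × V₀ := fun p q =>
      (⁅p.1, q.1⁆ + D p.2 q.1 - D q.2 p.1, ⁅p.2, q.2⁆)
    let src : K × V₀ → V₀ := fun p => p.2
    let tgt : K × V₀ → V₀ := fun p => del p.1 + p.2
    let un : V₀ → K × V₀ := fun y => (0, y)
    let comp : K × V₀ → K × V₀ → K × V₀ := fun p q => (p.1 + q.1, q.2)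
    -- source, target and unit are Lie algebra homomorphisms
    (∀ p q : K × V₀, src (br p q) = ⁅src p, src q⁆) ∧
    (∀ p q : K × V₀, tgt (br p q) = ⁅tgt p, tgt q⁆) ∧
    (∀ y y' : V₀, un ⁅y, y'⁆ = br (un y) (un y')) ∧
    -- composition is a Lie algebra homomorphism on composable pairs
    (∀ p q p' q' : K × V₀, src p = tgt q → src p' = tgt q' →
      src (br p p') = tgt (br q q') ∧
      comp (br p p') (br q q') = br (comp p q) (comp p' q')) := by
  intro K br src tgt un comp
  let δ : K →ₗ[ℝ] V₀ :=
    { toFun := del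
      map_add' := fun x y => by rw [hdel, hdel, hdel]; exact map_add t (x : V₁) y
      map_smul' := fun c x => by rw [hdel, hdel]; exact map_smul t c (x : V₁) }
  have hpeiffer : ∀ x x' : K, D (δ x) x' = ⁅x, x'⁆ := hcm2
  -- `K` has a second additive structure, from its `LieRing` instance; the Peiffer identity
  -- identifies its zero with the zero of the submodule.
  have hself : ∀ x : K, ⁅x, x⁆ = 0 := fun x =>
    (lie_self x).trans ((lie_self (0 : K)).symm.trans (lie_zero_of_peiffer hpeiffer 0))
  have htgt : ∀ p q, tgt (br p q) = ⁅tgt p, tgt q⁆ :=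
    crossedTarget_crossedBracket (δ := δ) del.map_lie hcm1
  refine ⟨fun _ _ => rfl, htgt, fun y y' => (crossedBracket_mk_zero_mk_zero hpeiffer y y').symm, ?_⟩
  intro p q p' q' hpq hpq'
  refine ⟨?_, crossedComp_crossedBracket hpeiffer hself hpq hpq'⟩
  change ⁅p.2, p'.2⁆ = _
  rw [htgt, ← hpq, ← hpq']

/-- Let `V = {V₁ ⇉ V₀}` be a 2-vector space with source `s`, target `t`, unit `e`.
    Suppose `ker s` and `V₀` carry Lie algebra structures, `∂ := t|_{ker s}` is a Lie
    algebra homomorphism, and `D : V₀ → Der(ker s)` is a Lie algebra homomorphism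
    (valued in derivations) making `(∂, D)` a crossed module. Then, under the
    identification `V₁ ≅ ker s ⊕ V₀`, the crossed-module bracket makes `V` a category
    internal to Lie algebras: source, target, unit and composition are Lie algebra
    homomorphisms. -/
theorem stmt_17 {V₁ V₀ : Type*} [AddCommGroup V₁] [Module ℝ V₁]
    [LieRing V₀] [LieAlgebra ℝ V₀]
    (s t : V₁ →ₗ[ℝ] V₀) (e : V₀ →ₗ[ℝ] V₁)
    (hse : ∀ v, s (e v) = v) (hte : ∀ v, t (e v) = v)
    [LieRing ↥(LinearMap.ker s)] [LieAlgebra ℝ ↥(LinearMap.ker s)]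
    (del : ↥(LinearMap.ker s) →ₗ⁅ℝ⁆ V₀)
    (hdel : ∀ x : LinearMap.ker s, del x = t (x : V₁))
    (D : V₀ →ₗ⁅ℝ⁆ Module.End ℝ ↥(LinearMap.ker s))
    (hder : ∀ (y : V₀) (a b : LinearMap.ker s),
      D y ⁅a, b⁆ = ⁅D y a, b⁆ + ⁅a, D y b⁆)
    (hcm1 : ∀ (y : V₀) (x : LinearMap.ker s), del (D y x) = ⁅y, del x⁆)
    (hcm2 : ∀ x x' : LinearMap.ker s, D (del x) x' = ⁅x, x'⁆) :
    let K := ↥(LinearMap.ker s)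
    let br : K × V₀ → K × V₀ → K × V₀ := fun p q =>
      (⁅p.1, q.1⁆ + D p.2 q.1 - D q.2 p.1, ⁅p.2, q.2⁆)
    let src : K × V₀ → V₀ := fun p => p.2
    let tgt : K × V₀ → V₀ := fun p => del p.1 + p.2
    let un : V₀ → K × V₀ := fun y => (0, y)
    let comp : K × V₀ → K × V₀ → K × V₀ := fun p q => (p.1 + q.1, q.2)
    -- source, target and unit are Lie algebra homomorphisms
    (∀ p q : K × V₀, src (br p q) = ⁅src p, src q⁆) ∧
    (∀ p q : K × V₀, tgt (br p q) = ⁅tgt p, tgt q⁆) ∧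
    (∀ y y' : V₀, un ⁅y, y'⁆ = br (un y) (un y')) ∧
    -- composition is a Lie algebra homomorphism on composable pairs
    (∀ p q p' q' : K × V₀, src p = tgt q → src p' = tgt q' →
      src (br p p') = tgt (br q q') ∧
      comp (br p p') (br q q') = br (comp p q) (comp p' q')) :=
  stmt_17_general s t del hdel D hcm1 hcm2
end
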